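/- Let G be a discrete group and let B₁, …, B_k be a finite collection of subsets of G. If the pair (G, B_i) has relative property (T) for each i = 1, …, k, then the pair (G, B₁B₂⋯B_k) also has relative property (T), where B₁B₂⋯B_k denotes the set of all elements of G representable as a product b₁b₂⋯b_k with b_i ∈ B_i. -/

import Mathlib

/-!
Since `π g` is an isometry, the displacement `‖π g v - v‖` is subadditive in `g`. So a vector that
is `(B, ε/2)`- and `(C, ε/2)`-invariant is `(B * C, ε)`-invariant, and for `B * C` one may take the
union of the finite sets and the minimum of the constants chosen for `B` and `C` at `ε/2`. As
`B₁B₂⋯B_k` is the pointwise product `(List.ofFn B).prod`, induction on the list concludes.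
-/

/-- The pair `(G, B)` has relative property (T): for every `ε > 0` there are a finite
subset `S ⊆ G` and `μ > 0` such that in every unitary representation of `G`, every
(nonzero) `(S,μ)`-invariant vector is `(B,ε)`-invariant. -/
def RelativePropertyT (G : Type*) [Group G] (B : Set G) : Prop :=
  ∀ ε : ℝ, 0 < ε → ∃ (S : Finset G) (μ : ℝ), 0 < μ ∧
    ∀ (V : Type) [NormedAddCommGroup V] [InnerProductSpace ℂ V] [CompleteSpace V]
      (π : G →* (V ≃ₗᵢ[ℂ] V)) (v : V), v ≠ 0 →
        (∀ s ∈ S, ‖π s v - v‖ ≤ μ * ‖v‖) → ∀ b ∈ B, ‖π b v - v‖ ≤ ε * ‖v‖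

/-- `Q` is a Kazhdan subset of `G`: there is `ε > 0` such that every unitary representation
of `G` with a (nonzero) `(Q,ε)`-invariant vector has a nonzero `G`-invariant vector. -/
def IsKazhdanSet (G : Type*) [Group G] (Q : Set G) : Prop :=
  ∃ ε : ℝ, 0 < ε ∧
    ∀ (V : Type) [NormedAddCommGroup V] [InnerProductSpace ℂ V] [CompleteSpace V]
      (π : G →* (V ≃ₗᵢ[ℂ] V)),
      (∃ v : V, v ≠ 0 ∧ ∀ s ∈ Q, ‖π s v - v‖ ≤ ε * ‖v‖) →
      ∃ v : V, v ≠ 0 ∧ ∀ g : G, π g v = v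

/-- `G` has Kazhdan's property (T). -/
def HasPropertyT (G : Type*) [Group G] : Prop :=
  ∃ S : Finset G, IsKazhdanSet G (↑S : Set G)

open scoped Pointwise

theorem norm_map_mul_sub_le {G R V : Type*} [Group G] [Semiring R] [SeminormedAddCommGroup V]
    [Module R V] (π : G →* (V ≃ₗᵢ[R] V)) (g h : G) (v : V) :
    ‖π (g * h) v - v‖ ≤ ‖π g v - v‖ + ‖π h v - v‖ :=
  calc ‖π (g * h) v - v‖ = ‖(π g (π h v) - π g v) + (π g v - v)‖ := by
        rw [map_mul, LinearIsometryEquiv.coe_mul, Function.comp_apply, sub_add_sub_cancel]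
    _ ≤ ‖π g (π h v) - π g v‖ + ‖π g v - v‖ := norm_add_le _ _
    _ = ‖π g v - v‖ + ‖π h v - v‖ := by
        rw [← map_sub, LinearIsometryEquiv.norm_map, add_comm]

namespace RelativePropertyT

variable {G : Type*} [Group G]

theorem one : RelativePropertyT G 1 := by
  refine fun ε hε => ⟨∅, 1, one_pos, fun V _ _ _ π v _ _ b hb => ?_⟩
  rw [Set.mem_one.mp hb, map_one, LinearIsometryEquiv.coe_one, id, sub_self, norm_zero]
  positivity

theorem mul {B C : Set G} (hB : RelativePropertyT G B) (hC : RelativePropertyT G C) :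
    RelativePropertyT G (B * C) := by
  intro ε hε
  obtain ⟨S₁, μ₁, hμ₁, hS₁⟩ := hB (ε / 2) (half_pos hε)
  obtain ⟨S₂, μ₂, hμ₂, hS₂⟩ := hC (ε / 2) (half_pos hε)
  classical
  refine ⟨S₁ ∪ S₂, min μ₁ μ₂, lt_min hμ₁ hμ₂, fun V _ _ _ π v hv hS g hg => ?_⟩
  obtain ⟨b, hb, c, hc, rfl⟩ := hg
  have hvB := hS₁ V π v hv (fun s hs => (hS s (Finset.mem_union_left _ hs)).trans <|
    by gcongr; exact min_le_left _ _) b hb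
  have hvC := hS₂ V π v hv (fun s hs => (hS s (Finset.mem_union_right _ hs)).trans <|
    by gcongr; exact min_le_right _ _) c hc
  calc ‖π (b * c) v - v‖ ≤ ‖π b v - v‖ + ‖π c v - v‖ := norm_map_mul_sub_le π b c v
    _ ≤ ε / 2 * ‖v‖ + ε / 2 * ‖v‖ := add_le_add hvB hvC
    _ = ε * ‖v‖ := by ring

theorem list_prod {l : List (Set G)} (hl : ∀ B ∈ l, RelativePropertyT G B) :
    RelativePropertyT G l.prod := by
  induction l with
  | nil => exact one
  | cons B l ih =>
    rw [List.prod_cons]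
    exact mul (hl B List.mem_cons_self) (ih fun C hC => hl C (List.mem_cons_of_mem B hC))

end RelativePropertyT

/-- Bounded generation principle: if `(G, Bᵢ)` has relative property (T) for each
`i = 1, …, k`, then so does `(G, B₁B₂⋯B_k)`, where `B₁B₂⋯B_k` is the set of all elements
of `G` representable as a product `b₁b₂⋯b_k` with `bᵢ ∈ Bᵢ`. -/
theorem relativePropertyT_of_product {G : Type*} [Group G] {k : ℕ} (B : Fin k → Set G)
    (h : ∀ i, RelativePropertyT G (B i)) :
    RelativePropertyT G
      {g : G | ∃ b : Fin k → G, (∀ i, b i ∈ B i) ∧ (List.ofFn b).prod = g} := by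
  have hprod : {g : G | ∃ b : Fin k → G, (∀ i, b i ∈ B i) ∧ (List.ofFn b).prod = g} =
      (List.ofFn B).prod := by
    ext g
    rw [Set.mem_prod_list_ofFn]
    exact ⟨fun ⟨b, hb, hg⟩ => ⟨fun i => ⟨b i, hb i⟩, hg⟩,
      fun ⟨b, hg⟩ => ⟨fun i => b i, fun i => (b i).2, hg⟩⟩
  rw [hprod]
  exact RelativePropertyT.list_prod (List.forall_mem_ofFn_iff.mpr h)
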